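/- arXiv:2603.17275 — 2 statements merged into one kernel-verified Lean document; each statement's English description precedes it below -/
import Mathlib

section
/- On the probability simplex Δ^{D−1} with D ≥ 2, the set of maximizers of the standard deviation std(x) equals the set of maximizers of the Hoyer measure H(x). -/
/-!
On the probability simplex the ℓ¹ norm is identically `1`, so both the standard deviation
(whose square is `(‖x‖₂² - 1/D)/D`) and the Hoyer measure (`(√D - 1/‖x‖₂)/(√D - 1)`)
are strictly increasing functions of `‖x‖₂²`. Hence both orders on the simplex agree with the
order of `‖x‖₂²`, and so do their sets of maximizers.
-/

open Finset

theorem Set.sep_forall_le_eq_of_le_iff {α β γ : Type*} [LE β] [LE γ] {S : Set α}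
    {f : α → β} {g : α → γ} (h : ∀ x ∈ S, ∀ y ∈ S, f y ≤ f x ↔ g y ≤ g x) :
    {x ∈ S | ∀ y ∈ S, f y ≤ f x} = {x ∈ S | ∀ y ∈ S, g y ≤ g x} :=
  Set.sep_ext_iff.mpr fun x hx =>
    ⟨fun hf y hy => (h x hx y hy).mp (hf y hy), fun hg y hy => (h x hx y hy).mpr (hg y hy)⟩

section

variable {ι : Type*} [Fintype ι]

noncomputable def coordStd (x : ι → ℝ) : ℝ :=
  √((1 / Fintype.card ι) * ∑ i, (x i - 1 / Fintype.card ι) ^ 2)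

noncomputable def hoyer (x : ι → ℝ) : ℝ :=
  (√(Fintype.card ι) - (∑ i, |x i|) / √(∑ i, x i ^ 2)) / (√(Fintype.card ι) - 1)

theorem sum_sq_pos_of_sum_ne_zero {x : ι → ℝ} (h : ∑ i, x i ≠ 0) : 0 < ∑ i, x i ^ 2 := by
  refine (sum_nonneg fun i _ => sq_nonneg (x i)).lt_of_ne fun h0 => h ?_
  have hx : ∀ i ∈ univ, x i ^ 2 = 0 :=
    (sum_eq_zero_iff_of_nonneg fun i _ => sq_nonneg _).mp h0.symm
  exact sum_eq_zero fun i hi => pow_eq_zero_iff two_ne_zero |>.mp (hx i hi)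

theorem sum_sub_inv_card_sq_of_sum_eq_one {x : ι → ℝ} (h : ∑ i, x i = 1) :
    ∑ i, (x i - 1 / Fintype.card ι) ^ 2 = ∑ i, x i ^ 2 - 1 / Fintype.card ι := by
  have hcard : (Fintype.card ι : ℝ) ≠ 0 := by
    rintro hc
    rw [Nat.cast_eq_zero, Fintype.card_eq_zero_iff] at hc
    simp at h
  simp only [sub_sq, sum_add_distrib, sum_sub_distrib, ← sum_mul, ← mul_sum, h, sum_const,
    card_univ, nsmul_eq_mul]
  field_simp
  ring

theorem coordStd_le_coordStd_iff {x y : ι → ℝ} (hx : x ∈ stdSimplex ℝ ι)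
    (hy : y ∈ stdSimplex ℝ ι) :
    coordStd y ≤ coordStd x ↔ ∑ i, y i ^ 2 ≤ ∑ i, x i ^ 2 := by
  have hcard : (0 : ℝ) < 1 / Fintype.card ι := by
    have : Nonempty ι := (nonempty_of_sum_ne_zero (hx.2.trans_ne one_ne_zero)).to_type
    positivity
  rw [coordStd, coordStd, Real.sqrt_le_sqrt_iff (by positivity), mul_le_mul_iff_right₀ hcard,
    sum_sub_inv_card_sq_of_sum_eq_one hx.2, sum_sub_inv_card_sq_of_sum_eq_one hy.2,
    sub_le_sub_iff_right]

theorem sum_abs_eq_one_of_mem_stdSimplex {x : ι → ℝ} (hx : x ∈ stdSimplex ℝ ι) :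
    ∑ i, |x i| = 1 := by
  rw [← hx.2]
  exact sum_congr rfl fun i _ => abs_of_nonneg (hx.1 i)

theorem hoyer_le_hoyer_iff (hι : 1 < Fintype.card ι) {x y : ι → ℝ}
    (hx : x ∈ stdSimplex ℝ ι) (hy : y ∈ stdSimplex ℝ ι) :
    hoyer y ≤ hoyer x ↔ ∑ i, y i ^ 2 ≤ ∑ i, x i ^ 2 := by
  have hden : 0 < √(Fintype.card ι : ℝ) - 1 := by
    rw [sub_pos, Real.lt_sqrt zero_le_one]
    exact_mod_cast hι
  have hxq := sum_sq_pos_of_sum_ne_zero (hx.2.trans_ne one_ne_zero)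
  have hyq := sum_sq_pos_of_sum_ne_zero (hy.2.trans_ne one_ne_zero)
  rw [hoyer, hoyer, sum_abs_eq_one_of_mem_stdSimplex hx, sum_abs_eq_one_of_mem_stdSimplex hy,
    div_le_div_iff_of_pos_right hden, sub_le_sub_iff_left,
    one_div_le_one_div (Real.sqrt_pos.mpr hxq) (Real.sqrt_pos.mpr hyq),
    Real.sqrt_le_sqrt_iff hxq.le]

end

theorem stmt_3 (D : ℕ) (hD : 2 ≤ D) :
    let Δ : Set (Fin D → ℝ) := {x | (∀ i, 0 ≤ x i) ∧ ∑ i, x i = 1}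
    let std : (Fin D → ℝ) → ℝ :=
      fun x => Real.sqrt ((1 / (D : ℝ)) * ∑ i, (x i - 1 / D) ^ 2)
    let H : (Fin D → ℝ) → ℝ :=
      fun x => (Real.sqrt D - (∑ i, |x i|) / Real.sqrt (∑ i, (x i) ^ 2)) / (Real.sqrt D - 1)
    {x ∈ Δ | ∀ y ∈ Δ, std y ≤ std x} = {x ∈ Δ | ∀ y ∈ Δ, H y ≤ H x} := by
  intro Δ std H
  have hstd : std = coordStd := by
    funext x
    simp only [std, coordStd, Fintype.card_fin]
  have hH : H = hoyer := by
    funext x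
    simp only [H, hoyer, Fintype.card_fin]
  have hcard : 1 < Fintype.card (Fin D) := by
    rw [Fintype.card_fin]
    omega
  change {x ∈ stdSimplex ℝ (Fin D) | ∀ y ∈ stdSimplex ℝ (Fin D), std y ≤ std x} =
    {x ∈ stdSimplex ℝ (Fin D) | ∀ y ∈ stdSimplex ℝ (Fin D), H y ≤ H x}
  rw [hstd, hH]
  exact Set.sep_forall_le_eq_of_le_iff fun x hx y hy =>
    (coordStd_le_coordStd_iff hx hy).trans (hoyer_le_hoyer_iff hcard hx hy).symm
end

section
/- On the probability simplex Δ^{D−1} with D ≥ 2, the Hoyer measure can be written as an explicit strictly increasing function of the standard deviation: H(x) = (√D − (D·std(x)² + 1/D)^{−1/2})/(√D − 1). Consequently, for x, y ∈ Δ^{D−1}, std(x) ≤ std(y) if and only if H(x) ≤ H(y). -/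
theorem stmt_8 (D : ℕ) (hD : 2 ≤ D) :
    let Δ : Set (Fin D → ℝ) := {x | (∀ i, 0 ≤ x i) ∧ ∑ i, x i = 1}
    let std2 : (Fin D → ℝ) → ℝ := fun x => (1 / (D : ℝ)) * ∑ i, (x i - 1 / D) ^ 2
    let std : (Fin D → ℝ) → ℝ := fun x => Real.sqrt (std2 x)
    let H : (Fin D → ℝ) → ℝ :=
      fun x => (Real.sqrt D - 1 / Real.sqrt (∑ i, (x i) ^ 2)) / (Real.sqrt D - 1)
    (∀ x ∈ Δ, H x = (Real.sqrt D - 1 / Real.sqrt (D * std2 x + 1 / D)) / (Real.sqrt D - 1))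
    ∧ (∀ x ∈ Δ, ∀ y ∈ Δ, (std x ≤ std y ↔ H x ≤ H y)) := by
  intro Δ std2 std H
  have hD0 : (0 : ℝ) < D := by positivity
  have hDne : (D : ℝ) ≠ 0 := ne_of_gt hD0
  have key : ∀ x ∈ Δ, (D : ℝ) * std2 x + 1 / D = ∑ i, (x i) ^ 2 := by
    intro x hx
    obtain ⟨hx0, hx1⟩ := hx
    simp only [std2]
    have h1 : ∑ i, (x i - 1 / D) ^ 2 = ∑ i, ((x i) ^ 2 - 2 / D * x i + 1 / D ^ 2) := by
      apply Finset.sum_congr rfl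
      intro i _
      ring
    rw [h1, Finset.sum_add_distrib, Finset.sum_sub_distrib, ← Finset.mul_sum, hx1,
      Finset.sum_const, Finset.card_univ, Fintype.card_fin, nsmul_eq_mul]
    field_simp
    ring
  have pos : ∀ x ∈ Δ, (0 : ℝ) < ∑ i, (x i) ^ 2 := by
    intro x hx
    obtain ⟨hx0, hx1⟩ := hx
    apply Finset.sum_pos' (fun i _ => sq_nonneg (x i))
    by_contra hcon
    push_neg at hcon
    have hall : ∀ i ∈ Finset.univ, x i = 0 := by
      intro i _
      have h2 : (x i) ^ 2 ≤ 0 := hcon i (Finset.mem_univ i)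
      have h3 : (x i) ^ 2 = 0 := le_antisymm h2 (sq_nonneg _)
      exact pow_eq_zero_iff two_ne_zero |>.mp h3
    rw [Finset.sum_congr rfl hall] at hx1
    simp at hx1
  have std2nn : ∀ x, 0 ≤ std2 x := by
    intro x
    have : (0:ℝ) ≤ ∑ i, (x i - 1/D)^2 := Finset.sum_nonneg fun i _ => sq_nonneg _
    simp only [std2]
    positivity
  refine ⟨fun x hx => by rw [key x hx], ?_⟩
  intro x hx y hy
  have hSx := pos x hx
  have hSy := pos y hy
  have kx := key x hx
  have ky := key y hy
  have hsqD : 1 < Real.sqrt D := by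
    rw [show (1:ℝ) = Real.sqrt 1 by simp]
    exact Real.sqrt_lt_sqrt (by norm_num) (by exact_mod_cast hD)
  have hden : 0 < Real.sqrt D - 1 := by linarith
  have h1 : std x ≤ std y ↔ std2 x ≤ std2 y :=
    Real.sqrt_le_sqrt_iff (std2nn y)
  have h2 : std2 x ≤ std2 y ↔ (∑ i, (x i) ^ 2) ≤ ∑ i, (y i) ^ 2 := by
    rw [← kx, ← ky]
    constructor
    · intro h; nlinarith
    · intro h; nlinarith
  have hsx : 0 < Real.sqrt (∑ i, (x i) ^ 2) := Real.sqrt_pos.mpr hSx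
  have hsy : 0 < Real.sqrt (∑ i, (y i) ^ 2) := Real.sqrt_pos.mpr hSy
  have h3 : (∑ i, (x i) ^ 2) ≤ (∑ i, (y i) ^ 2) ↔ H x ≤ H y := by
    simp only [H]
    rw [div_le_div_iff_of_pos_right hden, sub_le_sub_iff_left,
      one_div_le_one_div hsy hsx]
    exact (Real.sqrt_le_sqrt_iff hSy.le).symm
  rw [h1, h2, h3]
end
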